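/- Let P̄* ∈ ℝ^{n×r} have smallest singular value squared σ_r* (i.e., σ_r* = λ_r(P̄*ᵀP̄*)) and let Δ ∈ ℝ^{n×r} satisfy ΔᵀP̄* = P̄*ᵀΔ (symmetric cross term). Then ‖ΔP̄*ᵀ + P̄*Δᵀ‖_F² ≥ 2σ_r*·‖Δ‖_F². -/

import Mathlib

/-!
With `X = P̄*Δᵀ` we have `ΔP̄*ᵀ + P̄*Δᵀ = Xᵀ + X` and `‖Xᵀ + X‖² = 2‖X‖² + 2 tr(X²)`.
Cycling the trace, `tr(X²) = tr((ΔᵀP̄*)²)`, which is `‖ΔᵀP̄*‖² ≥ 0` because `ΔᵀP̄*` is symmetric.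
Since `P̄*ᵀP̄* - σ_r* I` is positive semidefinite, so is `Δ (P̄*ᵀP̄* - σ_r* I) Δᵀ`, and its trace
being nonnegative says `‖X‖² ≥ σ_r* ‖Δ‖²`.
-/

open Matrix

open scoped MatrixOrder ComplexOrder in
theorem Matrix.IsHermitian.posSemidef_sub_iInf_eigenvalues_smul_one {𝕜 n : Type*} [RCLike 𝕜]
    [Fintype n] [DecidableEq n] {A : Matrix n n 𝕜} (hA : A.IsHermitian) :
    (A - (⨅ i, hA.eigenvalues i) • (1 : Matrix n n 𝕜)).PosSemidef := by
  rw [← Matrix.le_iff, ← Algebra.algebraMap_eq_smul_one,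
    algebraMap_le_iff_le_spectrum hA.isSelfAdjoint, hA.spectrum_real_eq_range_eigenvalues]
  rintro _ ⟨i, rfl⟩
  exact ciInf_le (Set.finite_range _).bddBelow i

theorem Matrix.sum_sq_eq_trace_transpose_mul {m n R : Type*} [Fintype m] [Fintype n]
    [CommSemiring R]
    (M : Matrix m n R) : ∑ i, ∑ j, M i j ^ 2 = (Mᵀ * M).trace := by
  simp only [trace, diag, mul_apply, transpose_apply, sq]
  exact Finset.sum_comm

theorem Matrix.sum_sq_transpose_add_self {n R : Type*} [Fintype n] [CommRing R]
    (X : Matrix n n R) :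
    ∑ i, ∑ j, (Xᵀ + X) i j ^ 2 = 2 * ∑ i, ∑ j, X i j ^ 2 + 2 * (X * X).trace := by
  simp only [trace, diag, mul_apply, add_apply, transpose_apply, add_sq, Finset.sum_add_distrib,
    Finset.mul_sum]
  rw [Finset.sum_comm (f := fun i j => X j i ^ 2),
    Finset.sum_comm (f := fun i j => 2 * X j i * X i j)]
  simp only [← Finset.sum_add_distrib]
  exact Finset.sum_congr rfl fun i _ ↦ Finset.sum_congr rfl fun j _ ↦ by ring

theorem Matrix.trace_mul_transpose_mul_self_nonneg {m n R : Type*} [Fintype m] [Fintype n]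
    [CommRing R] [LinearOrder R] [IsStrictOrderedRing R]
    {A D : Matrix m n R} (h : Dᵀ * A = Aᵀ * D) : 0 ≤ (A * Dᵀ * (A * Dᵀ)).trace := by
  have hN : (Dᵀ * A)ᵀ = Dᵀ * A := by rw [transpose_mul, transpose_transpose, h]
  have hcyc : (A * Dᵀ * (A * Dᵀ)).trace = (Dᵀ * A * (Dᵀ * A)).trace := by
    simp only [Matrix.mul_assoc]
    rw [trace_mul_comm A]
    simp only [Matrix.mul_assoc]
  rw [hcyc]
  nth_rw 1 [← hN]
  rw [← sum_sq_eq_trace_transpose_mul]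
  positivity

theorem Matrix.mul_sum_sq_le_sum_sq_mul_transpose {k m n : Type*} [Fintype k] [Fintype m]
    [Fintype n] [DecidableEq n] {c : ℝ} (A : Matrix k n ℝ) (B : Matrix m n ℝ)
    (hc : (Aᵀ * A - c • 1).PosSemidef) :
    c * ∑ i, ∑ j, B i j ^ 2 ≤ ∑ i, ∑ j, (A * Bᵀ) i j ^ 2 := by
  have h := (hc.mul_mul_conjTranspose_same B).trace_nonneg
  rw [conjTranspose_eq_transpose_of_trivial, Matrix.mul_sub, Matrix.sub_mul, trace_sub,
    Matrix.mul_smul, Matrix.smul_mul, Matrix.mul_one, trace_smul, smul_eq_mul, sub_nonneg] at h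
  rw [sum_sq_eq_trace_transpose_mul, sum_sq_eq_trace_transpose_mul, trace_mul_comm Bᵀ,
    transpose_mul, transpose_transpose]
  simpa only [Matrix.mul_assoc] using h

/-- If `ΔᵀP̄*` is symmetric then `‖ΔP̄*ᵀ + P̄*Δᵀ‖_F² ≥ 2 σ_r* ‖Δ‖_F²`, where `σ_r*`
is the smallest eigenvalue of `P̄*ᵀP̄*`. -/
theorem tangent_lower_bound (n r : ℕ) (Pb Δ : Matrix (Fin n) (Fin r) ℝ)
    (hsymm : Δᵀ * Pb = Pbᵀ * Δ) :
    2 * (⨅ i, (Matrix.isHermitian_conjTranspose_mul_self Pb).eigenvalues i) *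
        (∑ i, ∑ k, Δ i k ^ 2) ≤
      ∑ i, ∑ j, (Δ * Pbᵀ + Pb * Δᵀ) i j ^ 2 := by
  have hPP := (isHermitian_conjTranspose_mul_self Pb).posSemidef_sub_iInf_eigenvalues_smul_one
  have hX : Δ * Pbᵀ = (Pb * Δᵀ)ᵀ := by rw [transpose_mul, transpose_transpose]
  rw [hX, sum_sq_transpose_add_self]
  have hlow := mul_sum_sq_le_sum_sq_mul_transpose Pb Δ hPP
  have hsq := trace_mul_transpose_mul_self_nonneg hsymm
  linarith
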